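/- arXiv:2001.00687 — 2 statements merged into one kernel-verified Lean document; each statement's English description precedes it below -/
import Mathlib

section
/- Let α ∈ [0, π/2) and let A, B ∈ M_n(ℂ) be sector matrices of angle α. Then Re((A + B)^{-1}) ≤ (sec²(α)/4) · (Re(A^{-1}) + Re(B^{-1})) in the Loewner order. -/
open Matrix
open scoped ComplexOrder

/-- The real (Hermitian) part of a complex matrix: `Re A = (A + Aᴴ)/2`. -/
noncomputable def matRe {n : ℕ} (A : Matrix (Fin n) (Fin n) ℂ) : Matrix (Fin n) (Fin n) ℂ :=
  (2⁻¹ : ℂ) • (A + Aᴴ)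

/-- `A` is a sector matrix of angle `α`: its numerical range is contained in
`S_α = {z : Re z > 0, |Im z| ≤ tan α · Re z}`. -/
def InSector {n : ℕ} (α : ℝ) (A : Matrix (Fin n) (Fin n) ℂ) : Prop :=
  ∀ x : Fin n → ℂ, star x ⬝ᵥ x = 1 →
    0 < (star x ⬝ᵥ A *ᵥ x).re ∧
      |(star x ⬝ᵥ A *ᵥ x).im| ≤ Real.tan α * (star x ⬝ᵥ A *ᵥ x).re

/-!
Write `H = Re A` and `K = Im A`, so that `A = H + iK`. Then `Re(A⁻¹) = A⁻ᴴ H A⁻¹` and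
`(Re A)⁻¹ = A⁻ᴴ (Aᴴ H⁻¹ A) A⁻¹ = A⁻ᴴ (H + K H⁻¹ K) A⁻¹`. For a sector matrix,
`0 ≤ K H⁻¹ K ≤ tan²α · H`; the upper bound follows by polarizing `|x*Kx| ≤ tan α · x*Hx`.
Hence `Re(A⁻¹) ≤ (Re A)⁻¹ ≤ sec²α · Re(A⁻¹)`, and the theorem is the chain
`Re((A+B)⁻¹) ≤ (Re A + Re B)⁻¹ ≤ ¼((Re A)⁻¹ + (Re B)⁻¹) ≤ ¼ sec²α (Re(A⁻¹) + Re(B⁻¹))`,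
whose middle step is the matrix harmonic–arithmetic mean inequality.
-/

open scoped MatrixOrder

namespace Matrix

section Loewner

variable {ι 𝕜 : Type*} [Fintype ι] [RCLike 𝕜]

instance : PosSMulMono ℝ (Matrix ι ι 𝕜) :=
  ⟨fun _ hc _ _ hXY => by rw [le_iff, ← smul_sub]; exact PosSemidef.smul hXY hc⟩

theorem PosDef.inv_add_le_smul_inv_add_inv [DecidableEq ι] {H G : Matrix ι ι 𝕜} (hH : H.PosDef)
    (hG : G.PosDef) : (H + G)⁻¹ ≤ (4⁻¹ : ℝ) • (H⁻¹ + G⁻¹) := by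
  have huH : IsUnit H.det := (isUnit_iff_isUnit_det H).mp hH.isUnit
  have huG : IsUnit G.det := (isUnit_iff_isUnit_det G).mp hG.isUnit
  have hXY : (H⁻¹ + G⁻¹).PosDef := hH.inv.add hG.inv
  have huXY : IsUnit (H⁻¹ + G⁻¹).det := (isUnit_iff_isUnit_det _).mp hXY.isUnit
  set X := H⁻¹
  set Y := G⁻¹
  set W := (X + Y)⁻¹
  have hHG : (H + G)⁻¹ = Y * W * X := by
    have : H + G = H * (X + Y) * G := by
      rw [mul_add, add_mul, mul_nonsing_inv _ huH, one_mul, mul_assoc,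
        nonsing_inv_mul _ huG, mul_one, add_comm]
    rw [this, mul_inv_rev, mul_inv_rev, mul_assoc]
  have hXW : X * W = 1 - Y * W := by
    rw [eq_sub_iff_add_eq, ← add_mul, mul_nonsing_inv _ huXY]
  have hWY : W * Y = 1 - W * X := by
    rw [eq_sub_iff_add_eq', ← mul_add, nonsing_inv_mul _ huXY]
  have hXWX : X * W * X = X - Y * W * X := by rw [hXW, sub_mul, one_mul]
  have hXWY : X * W * Y = Y - Y * W * Y := by rw [hXW, sub_mul, one_mul]
  have hYWY : Y * W * Y = Y - Y * W * X := by rw [mul_assoc, hWY, mul_sub, mul_one, mul_assoc]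
  have hsq : (X - Y) * W * (X - Y) = X + Y - 4 • (Y * W * X) := by
    rw [show (X - Y) * W * (X - Y) = X * W * X - X * W * Y - Y * W * X + Y * W * Y by
      noncomm_ring, hXWX, hXWY, hYWY]
    module
  have hXYh : (X - Y)ᴴ = X - Y := by
    rw [conjTranspose_sub, hH.inv.isHermitian.eq, hG.inv.isHermitian.eq]
  have hpsd : ((X - Y) * W * (X - Y)).PosSemidef := by
    simpa only [hXYh] using hXY.inv.posSemidef.conjTranspose_mul_mul_same (X - Y)
  rw [le_iff, show (4⁻¹ : ℝ) • (X + Y) - (H + G)⁻¹ = (4⁻¹ : ℝ) • ((X - Y) * W * (X - Y)) by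
    rw [hsq, hHG]; module]
  exact hpsd.smul (by norm_num)

end Loewner

section QuadraticForm

variable {ι : Type*} [Fintype ι]

theorem star_dotProduct_conjTranspose_mulVec (M : Matrix ι ι ℂ) (u v : ι → ℂ) :
    star v ⬝ᵥ Mᴴ *ᵥ u = star (star u ⬝ᵥ M *ᵥ v) := by
  rw [dotProduct_mulVec, ← star_mulVec, star_dotProduct]

theorem IsHermitian.re_dotProduct_mulVec_comm {K : Matrix ι ι ℂ} (hK : K.IsHermitian)
    (u v : ι → ℂ) : (star v ⬝ᵥ K *ᵥ u).re = (star u ⬝ᵥ K *ᵥ v).re := by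
  conv_lhs => rw [← hK.eq, star_dotProduct_conjTranspose_mulVec]
  exact Complex.conj_re _

theorem star_smul_dotProduct_mulVec_smul (M : Matrix ι ι ℂ) (r : ℝ) (x : ι → ℂ) :
    star (r • x) ⬝ᵥ M *ᵥ (r • x) = (r ^ 2) • (star x ⬝ᵥ M *ᵥ x) := by
  rw [star_smul, star_trivial, mulVec_smul, smul_dotProduct, dotProduct_smul, smul_smul, sq]

theorem exists_pos_star_smul_dotProduct_smul_eq_one {x : ι → ℂ} (hx : x ≠ 0) :
    ∃ r : ℝ, 0 < r ∧ star (r • x) ⬝ᵥ (r • x) = 1 := by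
  obtain ⟨hre, him⟩ := Complex.lt_def.mp (dotProduct_star_self_pos_iff.mpr hx)
  set c := (star x ⬝ᵥ x).re
  rw [Complex.zero_re] at hre
  have hxx : star x ⬝ᵥ x = (c : ℂ) := Complex.ext rfl him.symm
  refine ⟨(√c)⁻¹, inv_pos.mpr (Real.sqrt_pos.mpr hre), ?_⟩
  rw [star_smul, star_trivial, smul_dotProduct, dotProduct_smul, smul_smul, hxx, Complex.real_smul,
    ← Complex.ofReal_mul, ← sq, inv_pow, Real.sq_sqrt hre.le, inv_mul_cancel₀ hre.ne',
    Complex.ofReal_one]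

theorem IsHermitian.two_mul_re_dotProduct_mulVec_le {K H : Matrix ι ι ℂ} (hK : K.IsHermitian)
    {t : ℝ} (hKH : ∀ x, |(star x ⬝ᵥ K *ᵥ x).re| ≤ t * (star x ⬝ᵥ H *ᵥ x).re) (u v : ι → ℂ) :
    2 * (star u ⬝ᵥ K *ᵥ v).re ≤ t * ((star u ⬝ᵥ H *ᵥ u).re + (star v ⬝ᵥ H *ᵥ v).re) := by
  have hsum := (abs_le.mp (hKH (u + v))).2
  have hdiff := (abs_le.mp (hKH (u - v))).1
  have hvu := hK.re_dotProduct_mulVec_comm u v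
  simp only [star_add, star_sub, add_dotProduct, sub_dotProduct, mulVec_add, mulVec_sub,
    dotProduct_add, dotProduct_sub, Complex.add_re, Complex.sub_re] at hsum hdiff
  linear_combination (hsum + hdiff) / 2 - hvu

theorem IsHermitian.star_dotProduct_mulVec {P : Matrix ι ι ℂ} (hP : P.IsHermitian) (x w : ι → ℂ) :
    star x ⬝ᵥ P *ᵥ w = star (P *ᵥ x) ⬝ᵥ w := by
  rw [dotProduct_mulVec, star_mulVec, hP.eq]

theorem PosDef.mul_inv_mul_le_sq_smul [DecidableEq ι] {H K : Matrix ι ι ℂ} (hH : H.PosDef)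
    (hK : K.IsHermitian) {t : ℝ} (ht : 0 ≤ t)
    (hKH : ∀ x, |(star x ⬝ᵥ K *ᵥ x).re| ≤ t * (star x ⬝ᵥ H *ᵥ x).re) :
    K * H⁻¹ * K ≤ (t ^ 2) • H := by
  have huH : IsUnit H.det := (isUnit_iff_isUnit_det H).mp hH.isUnit
  have hHinv := hH.inv.isHermitian
  have hherm : ((t ^ 2) • H - K * H⁻¹ * K).IsHermitian := by
    refine (hH.isHermitian.smul (.all _)).sub ?_
    simpa only [hK.eq] using isHermitian_conjTranspose_mul_mul K hHinv
  refine .of_dotProduct_mulVec_nonneg hherm fun y => Complex.nonneg_iff.mpr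
    ⟨?_, (hherm.im_star_dotProduct_mulVec_self y).symm⟩
  set w := K *ᵥ y with hw
  set z := H⁻¹ *ᵥ w
  have hHz : H *ᵥ z = w := by rw [mulVec_mulVec, mul_nonsing_inv _ huH, one_mulVec]
  set q := (star w ⬝ᵥ H⁻¹ *ᵥ w).re
  set h := (star y ⬝ᵥ H *ᵥ y).re
  have hzw : star z ⬝ᵥ w = star w ⬝ᵥ H⁻¹ *ᵥ w := (hHinv.star_dotProduct_mulVec w w).symm
  -- polarization at `z = H⁻¹Ky` and `s • y`; then take `s = t`
  have hpol (s : ℝ) : 2 * (s * q) ≤ t * (q + s ^ 2 * h) := by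
    have := hK.two_mul_re_dotProduct_mulVec_le hKH z (s • y)
    rwa [star_smul_dotProduct_mulVec_smul, mulVec_smul, dotProduct_smul, ← hw, hHz, hzw,
      Complex.smul_re, Complex.smul_re] at this
  have hq : (star y ⬝ᵥ (K * H⁻¹ * K) *ᵥ y).re = q := by
    rw [← mulVec_mulVec, ← mulVec_mulVec, hK.star_dotProduct_mulVec]
  rw [sub_mulVec, smul_mulVec, dotProduct_sub, dotProduct_smul, Complex.sub_re, Complex.smul_re,
    hq, smul_eq_mul]
  rcases ht.eq_or_lt with rfl | htpos
  · nlinarith [hpol 1]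
  · nlinarith [hpol t]

end QuadraticForm

end Matrix

noncomputable def matIm {n : ℕ} (A : Matrix (Fin n) (Fin n) ℂ) : Matrix (Fin n) (Fin n) ℂ :=
  (-Complex.I * 2⁻¹) • (A - Aᴴ)

section RealImaginaryParts

variable {n : ℕ}

theorem matRe_isHermitian (A : Matrix (Fin n) (Fin n) ℂ) : (matRe A).IsHermitian := by
  simp only [matRe, IsHermitian, conjTranspose_smul, conjTranspose_add,
    conjTranspose_conjTranspose, star_inv₀, star_ofNat, add_comm]

theorem matIm_isHermitian (A : Matrix (Fin n) (Fin n) ℂ) : (matIm A).IsHermitian := by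
  simp only [matIm, IsHermitian, conjTranspose_smul, conjTranspose_sub,
    conjTranspose_conjTranspose, star_mul', star_neg, Complex.star_def, Complex.conj_I, star_inv₀,
    star_ofNat]
  module

theorem matRe_add_I_smul_matIm (A : Matrix (Fin n) (Fin n) ℂ) :
    matRe A + Complex.I • matIm A = A := by
  simp only [matRe, matIm, smul_smul, ← mul_assoc, mul_neg, Complex.I_mul_I]
  module

theorem matRe_sub_I_smul_matIm (A : Matrix (Fin n) (Fin n) ℂ) :
    matRe A - Complex.I • matIm A = Aᴴ := by
  simp only [matRe, matIm, smul_smul, ← mul_assoc, mul_neg, Complex.I_mul_I]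
  module

theorem matRe_add (A B : Matrix (Fin n) (Fin n) ℂ) : matRe (A + B) = matRe A + matRe B := by
  simp only [matRe, conjTranspose_add, smul_add]
  abel

theorem dotProduct_matRe_mulVec (A : Matrix (Fin n) (Fin n) ℂ) (x : Fin n → ℂ) :
    star x ⬝ᵥ matRe A *ᵥ x = ((star x ⬝ᵥ A *ᵥ x).re : ℂ) := by
  rw [matRe, smul_mulVec, add_mulVec, dotProduct_smul, dotProduct_add,
    star_dotProduct_conjTranspose_mulVec, Complex.re_eq_add_conj, Complex.star_def, smul_eq_mul]
  ring

theorem dotProduct_matIm_mulVec (A : Matrix (Fin n) (Fin n) ℂ) (x : Fin n → ℂ) :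
    star x ⬝ᵥ matIm A *ᵥ x = ((star x ⬝ᵥ A *ᵥ x).im : ℂ) := by
  rw [matIm, smul_mulVec, sub_mulVec, dotProduct_smul, dotProduct_sub,
    star_dotProduct_conjTranspose_mulVec, Complex.im_eq_sub_conj, Complex.star_def, smul_eq_mul]
  field_simp
  rw [Complex.I_sq]
  ring

theorem isUnit_det_of_posDef_matRe {A : Matrix (Fin n) (Fin n) ℂ} (hH : (matRe A).PosDef) :
    IsUnit A.det := by
  rw [isUnit_iff_ne_zero]
  intro hdet
  obtain ⟨v, hv, hAv⟩ := exists_mulVec_eq_zero_iff.mpr hdet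
  have := hH.dotProduct_mulVec_pos hv
  rw [dotProduct_matRe_mulVec, hAv, dotProduct_zero, Complex.zero_re, Complex.ofReal_zero] at this
  exact lt_irrefl _ this

theorem matRe_inv {A : Matrix (Fin n) (Fin n) ℂ} (hA : IsUnit A.det) :
    matRe A⁻¹ = A⁻¹ᴴ * matRe A * A⁻¹ := by
  rw [matRe, matRe, Matrix.mul_smul, Matrix.smul_mul, mul_add, add_mul,
    mul_nonsing_inv_cancel_right _ _ hA, ← conjTranspose_mul, mul_nonsing_inv _ hA, conjTranspose_one, one_mul, add_comm]

theorem conjTranspose_mul_inv_matRe_mul {A : Matrix (Fin n) (Fin n) ℂ}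
    (hH : IsUnit (matRe A).det) :
    Aᴴ * (matRe A)⁻¹ * A = matRe A + matIm A * (matRe A)⁻¹ * matIm A := by
  have hA := (matRe_add_I_smul_matIm A).symm
  rw [← matRe_sub_I_smul_matIm A]
  set H := matRe A
  set K := matIm A
  conv_lhs => rw [hA]
  simp only [sub_mul, mul_add, Matrix.smul_mul, Matrix.mul_smul, mul_nonsing_inv _ hH, one_mul,
    nonsing_inv_mul_cancel_right _ _ hH, smul_smul, Complex.I_mul_I]
  module

theorem inv_matRe_eq {A : Matrix (Fin n) (Fin n) ℂ} (hH : (matRe A).PosDef) :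
    (matRe A)⁻¹ = A⁻¹ᴴ * (matRe A + matIm A * (matRe A)⁻¹ * matIm A) * A⁻¹ := by
  have hA := isUnit_det_of_posDef_matRe hH
  have hAH : IsUnit Aᴴ.det := by rw [det_conjTranspose]; exact hA.star
  rw [← conjTranspose_mul_inv_matRe_mul ((isUnit_iff_isUnit_det _).mp hH.isUnit),
    conjTranspose_nonsing_inv, mul_assoc Aᴴ, nonsing_inv_mul_cancel_left _ _ hAH,
    mul_nonsing_inv_cancel_right _ _ hA]

theorem matRe_inv_le_inv_matRe {A : Matrix (Fin n) (Fin n) ℂ} (hH : (matRe A).PosDef) :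
    matRe A⁻¹ ≤ (matRe A)⁻¹ := by
  rw [matRe_inv (isUnit_det_of_posDef_matRe hH), inv_matRe_eq hH, ← star_eq_conjTranspose]
  refine star_left_conjugate_le_conjugate (le_add_of_nonneg_right ?_) _
  simpa only [(matIm_isHermitian A).eq] using
    (hH.inv.posSemidef.conjTranspose_mul_mul_same (matIm A)).nonneg

end RealImaginaryParts

section Sector

variable {n : ℕ} {α : ℝ} {A : Matrix (Fin n) (Fin n) ℂ}

theorem InSector.re_pos_and_abs_im_le (hA : InSector α A) {x : Fin n → ℂ} (hx : x ≠ 0) :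
    0 < (star x ⬝ᵥ A *ᵥ x).re ∧
      |(star x ⬝ᵥ A *ᵥ x).im| ≤ Real.tan α * (star x ⬝ᵥ A *ᵥ x).re := by
  obtain ⟨r, hr, hunit⟩ := exists_pos_star_smul_dotProduct_smul_eq_one hx
  have hr2 : 0 < r ^ 2 := by positivity
  have h := hA (r • x) hunit
  rw [star_smul_dotProduct_mulVec_smul, Complex.smul_re, Complex.smul_im, smul_eq_mul,
    smul_eq_mul, abs_mul, abs_of_pos hr2, mul_left_comm] at h
  exact ⟨pos_of_mul_pos_right h.1 hr2.le, le_of_mul_le_mul_left h.2 hr2⟩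

theorem InSector.posDef_matRe (hA : InSector α A) : (matRe A).PosDef :=
  .of_dotProduct_mulVec_pos (matRe_isHermitian A) fun x hx => by
    rw [dotProduct_matRe_mulVec, Complex.zero_lt_real]
    exact (hA.re_pos_and_abs_im_le hx).1

theorem InSector.abs_re_matIm_le (hA : InSector α A) (x : Fin n → ℂ) :
    |(star x ⬝ᵥ matIm A *ᵥ x).re| ≤ Real.tan α * (star x ⬝ᵥ matRe A *ᵥ x).re := by
  rw [dotProduct_matIm_mulVec, dotProduct_matRe_mulVec, Complex.ofReal_re, Complex.ofReal_re]
  rcases eq_or_ne x 0 with rfl | hx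
  · simp
  · exact (hA.re_pos_and_abs_im_le hx).2

theorem InSector.inv_matRe_le (hα : α ∈ Set.Ico 0 (Real.pi / 2)) (hA : InSector α A) :
    (matRe A)⁻¹ ≤ (Real.cos α)⁻¹ ^ 2 • matRe A⁻¹ := by
  obtain ⟨hα0, hαπ⟩ := hα
  have hcos : Real.cos α ≠ 0 :=
    (Real.cos_pos_of_mem_Ioo ⟨by linarith [Real.pi_pos], hαπ⟩).ne'
  have hsec : (Real.cos α)⁻¹ ^ 2 = 1 + Real.tan α ^ 2 := by
    rw [inv_pow, ← Real.inv_one_add_tan_sq hcos, inv_inv]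
  have hH := hA.posDef_matRe
  have hKH : matIm A * (matRe A)⁻¹ * matIm A ≤ Real.tan α ^ 2 • matRe A :=
    hH.mul_inv_mul_le_sq_smul (matIm_isHermitian A)
      (Real.tan_nonneg_of_nonneg_of_le_pi_div_two hα0 hαπ.le) hA.abs_re_matIm_le
  rw [inv_matRe_eq hH, matRe_inv (isUnit_det_of_posDef_matRe hH), ← Matrix.smul_mul,
    ← Matrix.mul_smul, ← star_eq_conjTranspose]
  refine star_left_conjugate_le_conjugate ?_ _
  rw [hsec, add_smul, one_smul]
  gcongr

end Sector

/-- For sector matrices `A, B` of angle `α ∈ [0, π/2)`,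
`Re((A+B)⁻¹) ≤ (sec²(α)/4) · (Re(A⁻¹) + Re(B⁻¹))` in the Loewner order. -/
theorem stmt1 {n : ℕ} {α : ℝ} (hα : α ∈ Set.Ico 0 (Real.pi / 2))
    {A B : Matrix (Fin n) (Fin n) ℂ} (hA : InSector α A) (hB : InSector α B) :
    (((Real.cos α)⁻¹ ^ 2 / 4) • (matRe A⁻¹ + matRe B⁻¹) - matRe (A + B)⁻¹).PosSemidef := by
  have hHA := hA.posDef_matRe
  have hHB := hB.posDef_matRe
  rw [← le_iff]
  calc matRe (A + B)⁻¹ ≤ (matRe (A + B))⁻¹ :=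
        matRe_inv_le_inv_matRe (by rw [matRe_add]; exact hHA.add hHB)
    _ = (matRe A + matRe B)⁻¹ := by rw [matRe_add]
    _ ≤ (4⁻¹ : ℝ) • ((matRe A)⁻¹ + (matRe B)⁻¹) := hHA.inv_add_le_smul_inv_add_inv hHB
    _ ≤ (4⁻¹ : ℝ) • ((Real.cos α)⁻¹ ^ 2 • matRe A⁻¹ + (Real.cos α)⁻¹ ^ 2 • matRe B⁻¹) := by
        gcongr
        exacts [hA.inv_matRe_le hα, hB.inv_matRe_le hα]
    _ = ((Real.cos α)⁻¹ ^ 2 / 4) • (matRe A⁻¹ + matRe B⁻¹) := by module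
end

section
/- Let X, Y ∈ M_n(ℂ) be positive definite matrices satisfying m·X ≤ Y ≤ M·X in the Loewner order for some 0 < m ≤ M, and let κ = max{K(m)², K(M)²}. Then (X + Y)/2 ≤ κ · ((X^{-1} + Y^{-1})/2)^{-1}, i.e., the arithmetic mean of X and Y is at most κ times their harmonic mean, in the Loewner order. -/
/-!
Write `X = s * s` with `s = √X`, a self-adjoint unit, and `Y = s * Z * s`. The congruence
`x ↦ s * x * s` preserves the Loewner order and commutes with both means, so it suffices to compare
`1 ∇ Z` and `1 ! Z`. These are continuous functions of `Z`, whose spectrum lies in `[m, M]`, and for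
a scalar `t > 0` one has `1 ∇ t = K(t) · (1 ! t)` exactly; it remains to bound
`K(t) ≤ max (K m) (K M) ≤ κ` on `[m, M]`, which holds because `K` decreases on `(0, 1]`, increases
on `[1, ∞)` and is at least `1`.
-/

open Matrix
open scoped ComplexOrder

/-- The Kantorovich constant `K(x) = (x+1)²/(4x)`. -/
noncomputable def kant (x : ℝ) : ℝ := (x + 1) ^ 2 / (4 * x)

open Ring

theorem one_le_kant {x : ℝ} (hx : 0 < x) : 1 ≤ kant x := by
  rw [kant, le_div_iff₀ (by positivity)]
  nlinarith [sq_nonneg (x - 1)]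

theorem kant_le_max_of_mem_Icc {m M t : ℝ} (hm : 0 < m) (ht : t ∈ Set.Icc m M) :
    kant t ≤ max (kant m) (kant M) := by
  obtain ⟨hmt, htM⟩ := ht
  have ht0 : 0 < t := hm.trans_le hmt
  -- cleared of denominators, `K t ≤ K m` reads `(t - m) (1 - m t) ≥ 0`, and `K t ≤ K M` reads
  -- `(M - t) (M t - 1) ≥ 0`
  rcases le_total t 1 with h | h
  · refine le_max_of_le_left ?_
    rw [kant, kant, div_le_div_iff₀ (by positivity) (by positivity)]
    nlinarith [mul_nonneg (sub_nonneg.2 hmt) (sub_nonneg.2 (mul_le_one₀ (hmt.trans h) ht0.le h))]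
  · refine le_max_of_le_right ?_
    have hM : 0 < M := ht0.trans_le htM
    rw [kant, kant, div_le_div_iff₀ (by positivity) (by positivity)]
    nlinarith [mul_nonneg (sub_nonneg.2 htM)
      (sub_nonneg.2 (one_le_mul_of_one_le_of_one_le h (h.trans htM)))]

theorem kant_mul_harmonic_eq_arith {t : ℝ} (ht : 0 < t) :
    kant t * (2⁻¹ * (1 + t⁻¹))⁻¹ = 2⁻¹ * (1 + t) := by
  rw [kant]
  field_simp
  ring

theorem Ring.inverse_conj {M₀ : Type*} [MonoidWithZero M₀] {s x : M₀} (hs : IsUnit s) :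
    (s * x * s)⁻¹ʳ = s⁻¹ʳ * x⁻¹ʳ * s⁻¹ʳ := by
  rw [Ring.inverse_mul (.inr hs), Ring.inverse_mul (.inl hs), mul_assoc]

section HarmonicMean

variable {A : Type*} [Ring A] [Algebra ℝ A]

noncomputable def harmonicMean (x y : A) : A := ((2⁻¹ : ℝ) • (x⁻¹ʳ + y⁻¹ʳ))⁻¹ʳ

theorem harmonicMean_conj {s : A} (hs : IsUnit s) (x y : A) :
    harmonicMean (s * x * s) (s * y * s) = s * harmonicMean x y * s := by
  rw [harmonicMean, harmonicMean, Ring.inverse_conj hs, Ring.inverse_conj hs, ← add_mul, ← mul_add,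
    ← smul_mul_assoc, ← mul_smul_comm, Ring.inverse_conj hs.ringInverse, Ring.inverse_inverse hs]

end HarmonicMean

theorem IsUnit.conj_le_conj_iff {A : Type*} [Ring A] [StarRing A] [PartialOrder A]
    [StarOrderedRing A] {s : A} (hsu : IsUnit s) (hs : IsSelfAdjoint s) {x y : A} :
    s * x * s ≤ s * y * s ↔ x ≤ y := by
  rw [← sub_nonneg, ← sub_mul, ← mul_sub]
  nth_rw 1 [← hs.star_eq]
  exact hsu.star_left_conjugate_nonneg_iff.trans sub_nonneg

section FunctionalCalculus

variable {A : Type*} [PartialOrder A] [Ring A] [StarRing A] [TopologicalSpace A]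
  [StarOrderedRing A] [Algebra ℝ A] [ContinuousFunctionalCalculus ℝ A IsSelfAdjoint]
  [NonnegSpectrumClass ℝ A]

theorem arithMean_one_le_smul_harmonicMean_one {z : A} {c : ℝ} (hz : IsSelfAdjoint z)
    (hspec : ∀ t ∈ spectrum ℝ z, 0 < t ∧ kant t ≤ c) :
    (2⁻¹ : ℝ) • (1 + z) ≤ c • harmonicMean 1 z := by
  have hne : ∀ t ∈ spectrum ℝ z, t ≠ 0 := fun t ht => (hspec t ht).1.ne'
  have hne' : ∀ t ∈ spectrum ℝ z, 2⁻¹ * (1 + t⁻¹) ≠ 0 := fun t ht => by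
    have := (hspec t ht).1
    positivity
  have hinv : ContinuousOn (fun t : ℝ => t⁻¹) (spectrum ℝ z) :=
    continuousOn_inv₀.mono fun t ht => hne t ht
  have hcont : ContinuousOn (fun t : ℝ => 2⁻¹ * (1 + t⁻¹)) (spectrum ℝ z) :=
    continuousOn_const.mul (continuousOn_const.add hinv)
  have hA : cfc (fun t : ℝ => 2⁻¹ * (1 + t)) z = (2⁻¹ : ℝ) • (1 + z) := by
    rw [cfc_const_mul _ (fun t : ℝ => 1 + t) z, cfc_const_add _ (fun t : ℝ => t) z, cfc_id' ℝ z,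
      map_one]
  have hH : cfc (fun t : ℝ => c * (2⁻¹ * (1 + t⁻¹))⁻¹) z = c • harmonicMean 1 z := by
    rw [cfc_const_mul _ (fun t : ℝ => (2⁻¹ * (1 + t⁻¹))⁻¹) z (hcont.inv₀ hne'),
      cfc_inv _ z hne' hcont, cfc_const_mul _ (fun t : ℝ => 1 + t⁻¹) z (continuousOn_const.add hinv),
      cfc_const_add _ _ z hinv, cfc_inv (fun t : ℝ => t) z hne, cfc_id' ℝ z, map_one, harmonicMean,
      Ring.inverse_one]
  rw [← hA, ← hH, cfc_le_iff (fun t : ℝ => 2⁻¹ * (1 + t)) (fun t : ℝ => c * (2⁻¹ * (1 + t⁻¹))⁻¹) z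
    (by fun_prop) (continuousOn_const.mul (hcont.inv₀ hne'))]
  intro t ht
  obtain ⟨ht0, hkc⟩ := hspec t ht
  rw [← kant_mul_harmonic_eq_arith ht0]
  gcongr

variable [StarModule ℝ A] [IsSemitopologicalRing A] [T2Space A]

theorem arithMean_le_smul_harmonicMean {a b : A} (ha : IsStrictlyPositive a) {m M c : ℝ}
    (hm : 0 < m) (h₁ : m • a ≤ b) (h₂ : b ≤ M • a) (hc : ∀ t ∈ Set.Icc m M, kant t ≤ c) :
    (2⁻¹ : ℝ) • (a + b) ≤ c • harmonicMean a b := by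
  obtain ⟨s, hsu, hs, rfl⟩ : ∃ s : A, IsUnit s ∧ IsSelfAdjoint s ∧ a = s * s :=
    ⟨CFC.sqrt a, ha.isUnit_cfcSqrt, (CFC.sqrt_nonneg a).isSelfAdjoint,
      (CFC.sqrt_mul_sqrt_self a).symm⟩
  obtain ⟨z, rfl⟩ : ∃ z, b = s * z * s :=
    ⟨s⁻¹ʳ * b * s⁻¹ʳ, by rw [← mul_assoc, Ring.mul_inverse_cancel_left _ _ hsu, mul_assoc,
      Ring.inverse_mul_cancel _ hsu, mul_one]⟩
  have hconj : ∀ r : ℝ, r • (s * s) = s * algebraMap ℝ A r * s := fun r => by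
    rw [Algebra.algebraMap_eq_smul_one, mul_smul_comm, smul_mul_assoc, mul_one]
  rw [hconj, hsu.conj_le_conj_iff hs] at h₁ h₂
  have hz : IsSelfAdjoint z := by
    simpa using (IsSelfAdjoint.of_nonneg (sub_nonneg.2 h₁)).add (.algebraMap A (.all m))
  have hspec : ∀ t ∈ spectrum ℝ z, t ∈ Set.Icc m M := fun t ht =>
    ⟨(algebraMap_le_iff_le_spectrum hz).1 h₁ t ht, (le_algebraMap_iff_spectrum_le hz).1 h₂ t ht⟩
  have hA : (2⁻¹ : ℝ) • (s * s + s * z * s) = s * ((2⁻¹ : ℝ) • (1 + z)) * s := by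
    rw [mul_smul_comm, smul_mul_assoc, mul_add, add_mul, mul_one]
  have hH : c • harmonicMean (s * s) (s * z * s) = s * (c • harmonicMean 1 z) * s := by
    rw [mul_smul_comm, smul_mul_assoc, ← harmonicMean_conj hsu, mul_one]
  rw [hA, hH, hsu.conj_le_conj_iff hs]
  exact arithMean_one_le_smul_harmonicMean_one hz fun t ht =>
    ⟨hm.trans_le (hspec t ht).1, hc t (hspec t ht)⟩

end FunctionalCalculus

theorem stmt11_general {n : ℕ} {X Y : Matrix (Fin n) (Fin n) ℂ}
    (hX : X.PosDef) {m M : ℝ} (hm : 0 < m)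
    (h1 : (Y - m • X).PosSemidef) (h2 : (M • X - Y).PosSemidef) :
    (max (kant m ^ 2) (kant M ^ 2) • ((2⁻¹ : ℝ) • (X⁻¹ + Y⁻¹))⁻¹ -
      (2⁻¹ : ℝ) • (X + Y)).PosSemidef := by
  have hκ : ∀ t ∈ Set.Icc m M, kant t ≤ max (kant m ^ 2) (kant M ^ 2) := fun t ht =>
    (kant_le_max_of_mem_Icc hm ht).trans <|
      max_le_max (le_self_pow₀ (one_le_kant hm) two_ne_zero)
        (le_self_pow₀ (one_le_kant (hm.trans_le (ht.1.trans ht.2))) two_ne_zero)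
  open MatrixOrder in
  have h := arithMean_le_smul_harmonicMean hX.isStrictlyPositive hm h1 h2 hκ
  simpa only [harmonicMean, ← nonsing_inv_eq_ringInverse] using Matrix.le_iff.1 h

/-- For positive definite `X, Y` with `m·X ≤ Y ≤ M·X` (`0 < m ≤ M`) and
`κ = max{K(m)², K(M)²}`, the arithmetic mean of `X` and `Y` is at most `κ` times their
harmonic mean: `(X+Y)/2 ≤ κ·((X⁻¹+Y⁻¹)/2)⁻¹` in the Loewner order. -/
theorem stmt11 {n : ℕ} {X Y : Matrix (Fin n) (Fin n) ℂ}
    (hX : X.PosDef) (hY : Y.PosDef) {m M : ℝ} (hm : 0 < m) (hmM : m ≤ M)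
    (h1 : (Y - m • X).PosSemidef) (h2 : (M • X - Y).PosSemidef) :
    (max (kant m ^ 2) (kant M ^ 2) • ((2⁻¹ : ℝ) • (X⁻¹ + Y⁻¹))⁻¹ -
      (2⁻¹ : ℝ) • (X + Y)).PosSemidef :=
  stmt11_general hX hm h1 h2
end
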